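/- arXiv:1509.08493 — 3 statements merged into one kernel-verified Lean document; each statement's English description precedes it below -/
import Mathlib

section
/- Let (X,σ) be a subshift, n ∈ ℕ, and k ∈ ℕ. If no word w ∈ L_n(X) extends uniquely k times to both the right and the left, then P_X(n+2k) ≥ 2·P_X(n). -/
open Filter Topology

/-- The left shift `σ` on bi-infinite sequences over the alphabet `A`. -/
def shiftMap (A : Type*) : (ℤ → A) → (ℤ → A) := fun x i => x (i + 1)

/-- A subshift: a nonempty, closed, shift-invariant subset of `A^ℤ`. -/
def IsSubshift {A : Type*} [TopologicalSpace A] (X : Set (ℤ → A)) : Prop :=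
  X.Nonempty ∧ IsClosed X ∧ shiftMap A '' X = X

/-- A minimal subshift: a subshift with no nonempty proper closed shift-invariant subset. -/
def IsMinimalSubshift {A : Type*} [TopologicalSpace A] (X : Set (ℤ → A)) : Prop :=
  IsSubshift X ∧
    ∀ Y : Set (ℤ → A), Y ⊆ X → Y.Nonempty → IsClosed Y → shiftMap A '' Y = Y → Y = X

/-- The words of length `n` in the language of `X`. -/
def Lang {A : Type*} (X : Set (ℤ → A)) (n : ℕ) : Set (Fin n → A) :=
  {w | ∃ x ∈ X, ∀ i : Fin n, x (i.val : ℤ) = w i}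

/-- The complexity function `P_X(n)`, the number of words of length `n` in `X`. -/
noncomputable def complexity {A : Type*} (X : Set (ℤ → A)) (n : ℕ) : ℕ :=
  (Lang X n).ncard

/-- The one-sided cylinder set `[w]_0^+` of the word `w` in `X`. -/
def cylinder {A : Type*} (X : Set (ℤ → A)) {n : ℕ} (w : Fin n → A) : Set ↥X :=
  {x | ∀ i : Fin n, (x : ℤ → A) (i.val : ℤ) = w i}

/-- `φ` commutes with the shift on `X`. -/
def CommutesWithShift {A : Type*} (X : Set (ℤ → A)) (φ : ↥X → ↥X) : Prop :=
  ∀ x y : ↥X, shiftMap A (x : ℤ → A) = (y : ℤ → A) →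
    shiftMap A ((φ x : ℤ → A)) = ((φ y : ℤ → A))

/-- The automorphism group of the subshift `(X, σ)`: homeomorphisms of `X`
commuting with the shift, as a subgroup of the permutation group of `X`. -/
def Aut {A : Type*} [TopologicalSpace A] (X : Set (ℤ → A)) : Subgroup (Equiv.Perm ↥X) where
  carrier := {φ | Continuous ⇑φ ∧ Continuous ⇑φ.symm ∧
    CommutesWithShift X ⇑φ ∧ CommutesWithShift X ⇑φ.symm}
  one_mem' := by
    refine ⟨?_, ?_, ?_, ?_⟩
    · simpa using continuous_id
    · exact continuous_id
    · intro x y h; simpa using h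
    · intro x y h; exact h
  mul_mem' := by
    rintro φ ψ ⟨hφ1, hφ2, hφ3, hφ4⟩ ⟨hψ1, hψ2, hψ3, hψ4⟩
    refine ⟨?_, ?_, ?_, ?_⟩
    · have h : ⇑(φ * ψ) = ⇑φ ∘ ⇑ψ := rfl
      rw [h]; exact hφ1.comp hψ1
    · have h : ⇑(φ * ψ).symm = ⇑ψ.symm ∘ ⇑φ.symm := rfl
      rw [h]; exact hψ2.comp hφ2
    · intro x y h
      exact hφ3 (ψ x) (ψ y) (hψ3 x y h)
    · intro x y h
      exact hψ4 (φ.symm x) (φ.symm y) (hφ4 x y h)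
  inv_mem' := by
    rintro φ ⟨h1, h2, h3, h4⟩
    exact ⟨h2, h1, h4, h3⟩

/-- `φ` is determined at the coordinate `0` by the window `[-R, R]`, i.e. `φ` is a
block code of range `R`. -/
def IsBlockCode {A : Type*} (X : Set (ℤ → A)) (φ : ↥X → ↥X) (R : ℕ) : Prop :=
  ∀ x y : ↥X, (∀ i : ℤ, -(R : ℤ) ≤ i → i ≤ (R : ℤ) → (x : ℤ → A) i = (y : ℤ → A) i) →
    (φ x : ℤ → A) 0 = (φ y : ℤ → A) 0

/-- `Aut_R(X)`: automorphisms `φ` such that both `φ` and `φ⁻¹` are block codes of range `R`. -/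
def AutR {A : Type*} [TopologicalSpace A] (X : Set (ℤ → A)) (R : ℕ) : Set (Equiv.Perm ↥X) :=
  {φ | φ ∈ Aut X ∧ IsBlockCode X ⇑φ R ∧ IsBlockCode X ⇑φ.symm R}

/-- `w` extends uniquely `k` times to the right: there is exactly one word of length
`n + k` in the language whose first `n` letters are `w`. -/
def ExtendsUniquelyRight {A : Type*} (X : Set (ℤ → A)) {n : ℕ} (w : Fin n → A) (k : ℕ) : Prop :=
  ∃! u : Fin (n + k) → A, u ∈ Lang X (n + k) ∧ ∀ i : Fin n, u (Fin.castAdd k i) = w i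

/-- `w` extends uniquely `k` times to the left: there is exactly one word of length
`n + k` in the language whose last `n` letters are `w`. -/
def ExtendsUniquelyLeft {A : Type*} (X : Set (ℤ → A)) {n : ℕ} (w : Fin n → A) (k : ℕ) : Prop :=
  ∃! u : Fin (n + k) → A, u ∈ Lang X (n + k) ∧
    ∀ i : Fin n, u (Fin.cast (Nat.add_comm k n) (Fin.natAdd k i)) = w i

/-- The Følner ratio `|F △ gF| / |F|`. -/
noncomputable def folnerRatio {G : Type*} [Group G] (F : Finset G) (g : G) : ℝ :=
  letI := Classical.decEq G
  ((symmDiff F (F.image (fun h => g * h))).card : ℝ) / (F.card : ℝ)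

/-- A countable discrete group is amenable if it admits a Følner sequence. -/
def IsAmenableGrp (G : Type*) [Group G] : Prop :=
  ∃ F : ℕ → Finset G,
    (∀ g : G, ∀ᶠ k in atTop, g ∈ F k) ∧
    (∀ g : G, Tendsto (fun k => folnerRatio (F k) g) atTop (𝓝 0))

/-- `S` is a finite symmetric generating set of `G`. -/
def IsSymmGen {G : Type*} [Group G] (S : Finset G) : Prop :=
  (∀ s ∈ S, s⁻¹ ∈ S) ∧ Subgroup.closure (S : Set G) = ⊤

/-- The growth function `γ_G^S(n)`: the number of elements of `G` expressible as a
product of at most `n` elements of `S`. -/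
noncomputable def growthFn {G : Type*} [Group G] (S : Finset G) (n : ℕ) : ℕ :=
  Nat.card {g : G // ∃ l : List G, l.length ≤ n ∧ (∀ x ∈ l, x ∈ S) ∧ l.prod = g}

/-- `G` has subexponential growth. -/
def HasSubexpGrowth (G : Type*) [Group G] : Prop :=
  ∀ S : Finset G, IsSymmGen S →
    Tendsto (fun n : ℕ => Real.log (growthFn S n) / (n : ℝ)) atTop (𝓝 0)


section Aux

variable {A : Type*} [TopologicalSpace A] {X : Set (ℤ → A)}

lemma shift_fwd (hX : IsSubshift X) (k : ℕ) {x : ℤ → A} (hx : x ∈ X) :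
    (fun i => x (i + (k : ℤ))) ∈ X := by
  induction k with
  | zero => simpa using hx
  | succ m ih =>
    have h1 : shiftMap A (fun i => x (i + (m : ℤ))) ∈ X := by
      rw [← hX.2.2]; exact Set.mem_image_of_mem _ ih
    have h2 : shiftMap A (fun i => x (i + (m : ℤ))) = fun i => x (i + ((m + 1 : ℕ) : ℤ)) := by
      funext i; simp only [shiftMap]; congr 1; push_cast; ring
    rwa [h2] at h1

lemma shift_bwd (hX : IsSubshift X) (k : ℕ) {x : ℤ → A} (hx : x ∈ X) :
    ∃ y ∈ X, ∀ i : ℤ, y (i + (k : ℤ)) = x i := by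
  induction k with
  | zero => exact ⟨x, hx, fun i => by simp⟩
  | succ m ih =>
    obtain ⟨y, hy, hyx⟩ := ih
    have hmem : y ∈ shiftMap A '' X := by rw [hX.2.2]; exact hy
    obtain ⟨z, hz, hzy⟩ := hmem
    refine ⟨z, hz, fun i => ?_⟩
    have h1 := congrFun hzy (i + (m : ℤ))
    simp only [shiftMap] at h1
    have h3 : i + ((m + 1 : ℕ) : ℤ) = i + (m : ℤ) + 1 := by push_cast; ring
    rw [h3, h1, hyx]

/-- The middle word of length `n` of a word of length `n + 2k`. -/
def mid (n k : ℕ) (u : Fin (n + 2 * k) → A) : Fin n → A :=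
  fun i => u ⟨k + i.val, by have := i.isLt; omega⟩

lemma pad_left_aux (hX : IsSubshift X) (n k : ℕ) {u : Fin (n + k) → A}
    (hu : u ∈ Lang X (n + k)) :
    ∃ U : Fin (n + 2 * k) → A, U ∈ Lang X (n + 2 * k) ∧
      ∀ j : Fin (n + k), U ⟨k + j.val, by have := j.isLt; omega⟩ = u j := by
  obtain ⟨z, hzX, hzu⟩ := hu
  obtain ⟨y, hyX, hy⟩ := shift_bwd hX k hzX
  refine ⟨fun i => y i.val, ⟨y, hyX, fun i => rfl⟩, fun j => ?_⟩
  show y ((k + j.val : ℕ) : ℤ) = u j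
  have h1 : ((k + j.val : ℕ) : ℤ) = (j.val : ℤ) + (k : ℤ) := by push_cast; ring
  rw [h1, hy]
  exact hzu j

lemma pad_right_aux (n k : ℕ) {u : Fin (n + k) → A} (hu : u ∈ Lang X (n + k)) :
    ∃ U : Fin (n + 2 * k) → A, U ∈ Lang X (n + 2 * k) ∧
      ∀ j : Fin (n + k), U ⟨j.val, by have := j.isLt; omega⟩ = u j := by
  obtain ⟨z, hzX, hzu⟩ := hu
  exact ⟨fun i => z i.val, ⟨z, hzX, fun i => rfl⟩, fun j => hzu j⟩

lemma two_in_fiber (hX : IsSubshift X) {n k : ℕ} {w : Fin n → A} (hw : w ∈ Lang X n)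
    (hne : ¬ (ExtendsUniquelyRight X w k ∧ ExtendsUniquelyLeft X w k)) :
    ∃ u v : Fin (n + 2 * k) → A, u ∈ Lang X (n + 2 * k) ∧ v ∈ Lang X (n + 2 * k) ∧
      u ≠ v ∧ mid n k u = w ∧ mid n k v = w := by
  rcases not_and_or.mp hne with hR | hL
  · -- two right extensions
    obtain ⟨x, hxX, hxw⟩ := hw
    set P : (Fin (n + k) → A) → Prop := fun u =>
      u ∈ Lang X (n + k) ∧ ∀ i : Fin n, u (Fin.castAdd k i) = w i with hP
    have hP0 : P (fun i : Fin (n + k) => x i.val) :=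
      ⟨⟨x, hxX, fun i => rfl⟩, fun i => hxw i⟩
    have hnu : ¬ ∀ v, P v → v = (fun i : Fin (n + k) => x i.val) :=
      fun hall => hR ⟨_, hP0, hall⟩
    push_neg at hnu
    obtain ⟨u1, hPu1, hne1⟩ := hnu
    obtain ⟨U0, hU0, hU0e⟩ := pad_left_aux hX n k hP0.1
    obtain ⟨U1, hU1, hU1e⟩ := pad_left_aux hX n k hPu1.1
    refine ⟨U1, U0, hU1, hU0, ?_, ?_, ?_⟩
    · intro hEq
      apply hne1
      funext j
      have := congrFun hEq (⟨k + j.val, by have := j.isLt; omega⟩ : Fin (n + 2 * k))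
      rw [hU1e j, hU0e j] at this
      exact this
    · funext i
      show U1 ⟨k + i.val, _⟩ = w i
      rw [hU1e ⟨i.val, by have := i.isLt; omega⟩]
      exact hPu1.2 i
    · funext i
      show U0 ⟨k + i.val, _⟩ = w i
      rw [hU0e ⟨i.val, by have := i.isLt; omega⟩]
      exact hP0.2 i
  · -- two left extensions
    obtain ⟨x, hxX, hxw⟩ := hw
    obtain ⟨y, hyX, hy⟩ := shift_bwd hX k hxX
    set Q : (Fin (n + k) → A) → Prop := fun u =>
      u ∈ Lang X (n + k) ∧
        ∀ i : Fin n, u (Fin.cast (Nat.add_comm k n) (Fin.natAdd k i)) = w i with hQ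
    have hQ0 : Q (fun i : Fin (n + k) => y i.val) := by
      refine ⟨⟨y, hyX, fun i => rfl⟩, fun i => ?_⟩
      show y ((k + i.val : ℕ) : ℤ) = w i
      have h1 : ((k + i.val : ℕ) : ℤ) = (i.val : ℤ) + (k : ℤ) := by push_cast; ring
      rw [h1, hy]
      exact hxw i
    have hnu : ¬ ∀ v, Q v → v = (fun i : Fin (n + k) => y i.val) :=
      fun hall => hL ⟨_, hQ0, hall⟩
    push_neg at hnu
    obtain ⟨u1, hQu1, hne1⟩ := hnu
    obtain ⟨U0, hU0, hU0e⟩ := pad_right_aux n k hQ0.1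
    obtain ⟨U1, hU1, hU1e⟩ := pad_right_aux n k hQu1.1
    refine ⟨U1, U0, hU1, hU0, ?_, ?_, ?_⟩
    · intro hEq
      apply hne1
      funext j
      have := congrFun hEq (⟨j.val, by have := j.isLt; omega⟩ : Fin (n + 2 * k))
      rw [hU1e j, hU0e j] at this
      exact this
    · funext i
      show U1 ⟨k + i.val, _⟩ = w i
      rw [hU1e ⟨k + i.val, by have := i.isLt; omega⟩]
      exact hQu1.2 i
    · funext i
      show U0 ⟨k + i.val, _⟩ = w i
      rw [hU0e ⟨k + i.val, by have := i.isLt; omega⟩]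
      exact hQ0.2 i

end Aux

/-- If no word of length `n` in the language of a subshift extends
uniquely `k` times to both the right and the left, then `P_X(n + 2k) ≥ 2 P_X(n)`. -/
theorem stmt11 {A : Type*} [Fintype A] [TopologicalSpace A] [DiscreteTopology A]
    (X : Set (ℤ → A)) (hX : IsSubshift X) (n k : ℕ)
    (h : ∀ w ∈ Lang X n, ¬ (ExtendsUniquelyRight X w k ∧ ExtendsUniquelyLeft X w k)) :
    2 * complexity X n ≤ complexity X (n + 2 * k) := by
  classical
  have hfin2 : (Lang X (n + 2 * k)).Finite := Set.toFinite _
  have hfin1 : (Lang X n).Finite := Set.toFinite _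
  have hmaps : ∀ u ∈ Lang X (n + 2 * k), mid n k u ∈ Lang X n := by
    rintro u ⟨x, hxX, hxu⟩
    refine ⟨fun i => x (i + (k : ℤ)), shift_fwd hX k hxX, fun i => ?_⟩
    show x ((i.val : ℤ) + (k : ℤ)) = u ⟨k + i.val, _⟩
    rw [← hxu ⟨k + i.val, by have := i.isLt; omega⟩]
    congr 1
    push_cast
    ring
  set s := hfin2.toFinset with hs
  set t := hfin1.toFinset with ht
  have hmaps' : ∀ u ∈ s, mid n k u ∈ t := by
    intro u hu
    rw [ht, Set.Finite.mem_toFinset]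
    exact hmaps u (by rwa [hs, Set.Finite.mem_toFinset] at hu)
  have hsum := Finset.card_eq_sum_card_fiberwise hmaps'
  have hfib : ∀ b ∈ t, 2 ≤ (s.filter fun u => mid n k u = b).card := by
    intro b hb
    have hbL : b ∈ Lang X n := by rwa [ht, Set.Finite.mem_toFinset] at hb
    obtain ⟨u, v, hu, hv, huv, hmu, hmv⟩ := two_in_fiber hX hbL (h b hbL)
    have hsub : ({u, v} : Finset _) ⊆ s.filter fun z => mid n k z = b := by
      intro z hz
      rcases Finset.mem_insert.mp hz with rfl | hz
      · exact Finset.mem_filter.mpr ⟨by rw [hs, Set.Finite.mem_toFinset]; exact hu, hmu⟩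
      · rcases Finset.mem_singleton.mp hz with rfl
        exact Finset.mem_filter.mpr ⟨by rw [hs, Set.Finite.mem_toFinset]; exact hv, hmv⟩
    calc 2 = ({u, v} : Finset _).card := (Finset.card_pair huv).symm
      _ ≤ _ := Finset.card_le_card hsub
  have h2 : 2 * t.card ≤ s.card := by
    rw [hsum, two_mul]
    calc t.card + t.card = ∑ _b ∈ t, 2 := by
          rw [Finset.sum_const, smul_eq_mul]; ring
      _ ≤ ∑ b ∈ t, (s.filter fun u => mid n k u = b).card := Finset.sum_le_sum hfib
  rw [complexity, complexity, Set.ncard_eq_toFinset_card _ hfin1,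
    Set.ncard_eq_toFinset_card _ hfin2]
  exact h2
end

section
/- Suppose (X,σ) is a minimal subshift over a finite alphabet and w ∈ L(X). Then the subgroup G_w of Aut(X) generated by S_w := {φ ∈ Aut_{⌊|w|/2⌋}(X) : φ([w]_0^+) ⊆ [w]_0^+} is finite. -/
open Filter Topology

/-!
Every element `g` of the group generated by `S_w` preserves the positions at which `w` occurs:
for a generator this is where minimality enters, since an automorphism mapping the clopen
cylinder `[w]` into itself maps it onto itself. Moreover, on a stretch `[a, b)` between two
occurrences of `w` in `x`, the image `g x` depends only on `x` on `[a, b + |w|)`. For a generator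
this holds because its range `⌊|w|/2⌋` is at most `|w|`, and it passes to products because
occurrences are preserved. Minimality also bounds the gaps between occurrences of `w`, so all
elements of the group are block codes of one fixed range, and there are only finitely many.
-/

open Set

section Subshift

variable {A : Type*} {X : Set (ℤ → A)}

lemma mem_of_shiftMap_mem (hσ : shiftMap A '' X = X) {x : ℤ → A} (hx : shiftMap A x ∈ X) :
    x ∈ X := by
  rw [← hσ] at hx
  obtain ⟨y, hy, hyx⟩ := hx
  convert hy using 1
  funext i
  simpa [shiftMap] using (congrFun hyx (i - 1)).symm

def shiftPerm (hσ : shiftMap A '' X = X) : Equiv.Perm X where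
  toFun z := ⟨shiftMap A z, hσ.subset (mem_image_of_mem _ z.2)⟩
  invFun z := ⟨fun i => (z : ℤ → A) (i - 1), mem_of_shiftMap_mem hσ <| by
    convert z.2 using 1
    funext i
    simp [shiftMap]⟩
  left_inv z := Subtype.ext (funext fun i => by simp [shiftMap])
  right_inv z := Subtype.ext (funext fun i => by simp [shiftMap])

@[simp]
lemma shiftPerm_zpow_apply (hσ : shiftMap A '' X = X) (k : ℤ) (z : X) (i : ℤ) :
    ((shiftPerm hσ ^ k) z : ℤ → A) i = (z : ℤ → A) (i + k) := by
  induction k using Int.induction_on generalizing z with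
  | zero => simp
  | succ k ih =>
    rw [zpow_add_one, Equiv.Perm.mul_apply, ih]
    simp [shiftPerm, shiftMap, add_assoc]
  | pred k ih =>
    rw [zpow_sub_one, Equiv.Perm.mul_apply, ih]
    simp only [shiftPerm, Equiv.Perm.inv_def, Equiv.coe_fn_symm_mk]
    ring_nf

lemma continuous_shiftPerm_zpow [TopologicalSpace A] (hσ : shiftMap A '' X = X) (k : ℤ) :
    Continuous (shiftPerm hσ ^ k) :=
  continuous_induced_rng.2 <| continuous_pi fun i => by
    simpa [Function.comp_def] using (continuous_apply (i + k)).comp continuous_subtype_val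

lemma CommutesWithShift.commute_shiftPerm (hσ : shiftMap A '' X = X) {φ : Equiv.Perm X}
    (hφ : CommutesWithShift X φ) : Commute φ (shiftPerm hσ) :=
  Equiv.ext fun z => Subtype.ext (hφ z (shiftPerm hσ z) rfl).symm

lemma CommutesWithShift.apply_zpow (hσ : shiftMap A '' X = X) {φ : Equiv.Perm X}
    (hφ : CommutesWithShift X φ) (k : ℤ) (z : X) :
    φ ((shiftPerm hσ ^ k) z) = (shiftPerm hσ ^ k) (φ z) :=
  (DFunLike.congr_fun ((hφ.commute_shiftPerm hσ).zpow_right k).eq z :)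

lemma CommutesWithShift.apply_eq_apply_zero (hσ : shiftMap A '' X = X) {φ : Equiv.Perm X}
    (hφ : CommutesWithShift X φ) (x : X) (i : ℤ) :
    (φ x : ℤ → A) i = (φ ((shiftPerm hσ ^ i) x) : ℤ → A) 0 := by
  rw [hφ.apply_zpow hσ, shiftPerm_zpow_apply, zero_add]

lemma IsBlockCode.apply_eq_of_eqOn (hσ : shiftMap A '' X = X) {φ : Equiv.Perm X} {R : ℕ}
    (hφ : CommutesWithShift X φ) (hR : IsBlockCode X φ R) {x y : X} {i : ℤ}
    (hxy : EqOn (x : ℤ → A) y (Icc (i - R) (i + R))) :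
    (φ x : ℤ → A) i = (φ y : ℤ → A) i := by
  rw [hφ.apply_eq_apply_zero hσ x, hφ.apply_eq_apply_zero hσ y]
  refine hR _ _ fun m hm₁ hm₂ => ?_
  simpa using hxy ⟨by omega, by omega⟩

lemma finite_setOf_commutesWithShift_isBlockCode [Finite A] (hσ : shiftMap A '' X = X)
    (R : ℕ) : {φ : Equiv.Perm X | CommutesWithShift X φ ∧ IsBlockCode X φ R}.Finite := by
  let window : X → Icc (-(R : ℤ)) R → A := fun x k => (x : ℤ → A) k
  let localRule : Equiv.Perm X → (Icc (-(R : ℤ)) R → A) → Set A :=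
    fun φ u => (fun x => (φ x : ℤ → A) 0) '' {x | window x = u}
  refine Set.Finite.of_finite_image (f := localRule) (Set.toFinite _) ?_
  rintro φ ⟨hφ, -⟩ ψ ⟨hψ, hψR⟩ hrule
  have hzero : ∀ x, (φ x : ℤ → A) 0 = (ψ x : ℤ → A) 0 := by
    intro x
    obtain ⟨y, hy, hyx⟩ : (φ x : ℤ → A) 0 ∈ localRule ψ (window x) :=
      hrule ▸ ⟨x, rfl, rfl⟩
    rw [← hyx]
    exact hψR y x fun i h₁ h₂ => congrFun hy ⟨i, h₁, h₂⟩
  refine Equiv.ext fun x => Subtype.ext (funext fun i => ?_)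
  rw [hφ.apply_eq_apply_zero hσ, hψ.apply_eq_apply_zero hσ, hzero]

lemma IsMinimalSubshift.image_shiftMap_eq [TopologicalSpace A] (hX : IsMinimalSubshift X) :
    shiftMap A '' X = X :=
  hX.1.2.2

lemma IsMinimalSubshift.eq_univ_of_isClosed [TopologicalSpace A] (hX : IsMinimalSubshift X) {W : Set X}
    (hW : IsClosed W) (hne : W.Nonempty)
    (hinv : ∀ z, shiftPerm hX.image_shiftMap_eq z ∈ W ↔ z ∈ W) : W = univ := by
  set σ := shiftPerm hX.image_shiftMap_eq
  have himage : shiftMap A '' (Subtype.val '' W) = Subtype.val '' W := by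
    ext x
    constructor
    · rintro ⟨-, ⟨u, hu, rfl⟩, rfl⟩
      exact ⟨σ u, (hinv u).2 hu, rfl⟩
    · rintro ⟨u, hu, rfl⟩
      refine ⟨σ.symm u, ⟨_, (hinv _).1 (by simpa using hu), rfl⟩, ?_⟩
      exact congrArg Subtype.val (σ.apply_symm_apply u)
  have hY := hX.2 _ (Subtype.coe_image_subset X W) (hne.image _)
    (hX.1.2.1.isClosedMap_subtype_val W hW) himage
  refine eq_univ_of_forall fun z => ?_
  obtain ⟨u, hu, huz⟩ : (z : ℤ → A) ∈ Subtype.val '' W := hY.symm ▸ z.2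
  exact Subtype.ext huz ▸ hu

lemma IsMinimalSubshift.exists_zpow_mem [TopologicalSpace A] (hX : IsMinimalSubshift X)
    {V : Set X} (hV : IsOpen V) (hne : V.Nonempty) (z : X) :
    ∃ k : ℤ, (shiftPerm hX.image_shiftMap_eq ^ k) z ∈ V := by
  set σ := shiftPerm hX.image_shiftMap_eq
  by_contra! hz
  let W := ⋂ k : ℤ, (σ ^ k) ⁻¹' Vᶜ
  have hW : W = univ := by
    refine hX.eq_univ_of_isClosed (isClosed_iInter fun k => hV.isClosed_compl.preimage
      (continuous_shiftPerm_zpow _ k)) ⟨z, mem_iInter.2 hz⟩ fun u => ?_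
    have hshift : ∀ k : ℤ, (σ ^ k) (shiftPerm hX.image_shiftMap_eq u) = (σ ^ (k + 1)) u :=
      fun k => by rw [zpow_add_one, Equiv.Perm.mul_apply]
    simp only [W, mem_iInter, mem_preimage, hshift]
    exact ⟨fun h k => by simpa using h (k - 1), fun h k => h (k + 1)⟩
  obtain ⟨v, hv⟩ := hne
  exact mem_iInter.1 (hW ▸ mem_univ v : v ∈ W) 0 (by simpa using hv)

lemma IsMinimalSubshift.exists_uniform_return [TopologicalSpace A] [CompactSpace A]
    (hX : IsMinimalSubshift X) {V : Set X} (hV : IsOpen V) (hne : V.Nonempty) :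
    ∃ K : ℕ, ∀ (z : X) (j : ℤ),
      ∃ i ∈ Icc j (j + K), (shiftPerm hX.image_shiftMap_eq ^ i) z ∈ V := by
  set σ := shiftPerm hX.image_shiftMap_eq
  let U : ℕ → Set X := fun N => ⋃ k ∈ Icc (-(N : ℤ)) N, (σ ^ k) ⁻¹' V
  have hcover : univ ⊆ ⋃ N, U N := fun z _ => by
    obtain ⟨k, hk⟩ := hX.exists_zpow_mem hV hne z
    exact mem_iUnion.2 ⟨k.natAbs, mem_iUnion₂.2 ⟨k, ⟨by omega, by omega⟩, hk⟩⟩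
  obtain ⟨N, hN⟩ := (isCompact_iff_isCompact_univ.1 hX.1.2.1.isCompact).elim_directed_cover U
    (fun N => isOpen_biUnion fun k _ => hV.preimage (continuous_shiftPerm_zpow _ k)) hcover
    (Monotone.directed_le fun M N hMN =>
      biUnion_subset_biUnion_left (Icc_subset_Icc (by omega) (by omega)))
  refine ⟨2 * N, fun z j => ?_⟩
  obtain ⟨k, ⟨hk₁, hk₂⟩, hkV⟩ := mem_iUnion₂.1 (hN (mem_univ ((σ ^ (j + N)) z)))
  refine ⟨k + (j + N), ⟨by omega, by omega⟩, ?_⟩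
  rwa [zpow_add, Equiv.Perm.mul_apply]

/-- Counting visits to `U` in a window of length `M`, where every orbit meets `φ⁻¹ U \ U`
within `M` steps: `φ` strictly increases this count, which is bounded. -/
lemma IsMinimalSubshift.apply_mem_iff_of_mapsTo [TopologicalSpace A] [CompactSpace A]
    (hX : IsMinimalSubshift X) {U : Set X} (hU : IsClopen U) {φ : Equiv.Perm X}
    (hφc : Continuous φ) (hφ : CommutesWithShift X φ) (hmaps : MapsTo φ U U) (z : X) :
    φ z ∈ U ↔ z ∈ U := by
  classical
  set σ := shiftPerm hX.image_shiftMap_eq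
  refine ⟨fun hz => ?_, fun hz => hmaps hz⟩
  by_contra hzU
  obtain ⟨M, hM⟩ := hX.exists_uniform_return
    ((hU.isOpen.preimage hφc).inter hU.isClosed.isOpen_compl) ⟨z, hz, hzU⟩
  let visits : X → Finset ℤ := fun u =>
    (Finset.Icc 0 (M : ℤ)).filter fun i => (σ ^ i) u ∈ U
  have hvisits : ∀ u, visits u ⊂ visits (φ u) := by
    intro u
    obtain ⟨i, hi, hiφ, hiU⟩ := hM u 0
    rw [zero_add] at hi
    have hmono : visits u ⊆ visits (φ u) := Finset.monotone_filter_right _ fun i _ hi => by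
      rw [← hφ.apply_zpow]
      exact hmaps hi
    refine (Finset.ssubset_iff_of_subset hmono).2
      ⟨i, ?_, fun hi' => hiU (Finset.mem_filter.1 hi').2⟩
    rw [Finset.mem_filter, ← hφ.apply_zpow]
    exact ⟨Finset.mem_Icc.2 ⟨hi.1, hi.2⟩, hiφ⟩
  have hcount : ∀ k : ℕ, k ≤ (visits (φ^[k] z)).card := by
    intro k
    induction k with
    | zero => exact Nat.zero_le _
    | succ k ih =>
      rw [Function.iterate_succ_apply']
      exact ih.trans_lt (Finset.card_lt_card (hvisits _))
  have := (hcount (M + 2)).trans (Finset.card_filter_le _ _)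
  simp only [Int.card_Icc] at this
  omega

variable {n : ℕ} {w : Fin n → A}

def OccursAt (w : Fin n → A) (x : ℤ → A) (a : ℤ) : Prop :=
  ∀ t : Fin n, x (a + t) = w t

lemma OccursAt.eqOn {x y : ℤ → A} {a : ℤ} (hx : OccursAt w x a) (hy : OccursAt w y a) :
    EqOn x y (Ico a (a + n)) := by
  rintro m ⟨h₁, h₂⟩
  obtain ⟨t, rfl⟩ : ∃ t : Fin n, a + t = m :=
    ⟨⟨(m - a).toNat, by omega⟩, by simpa using by omega⟩
  rw [hx t, hy t]

lemma OccursAt.of_eqOn {x y : ℤ → A} {a : ℤ} (hx : OccursAt w x a)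
    (hxy : EqOn x y (Ico a (a + n))) : OccursAt w y a := fun t =>
  (hxy ⟨by omega, by have := t.isLt; omega⟩).symm.trans (hx t)

lemma mem_cylinder_iff {z : X} : z ∈ cylinder X w ↔ OccursAt w z 0 := by
  simp [cylinder, OccursAt]

lemma shiftPerm_zpow_mem_cylinder_iff (hσ : shiftMap A '' X = X) (z : X) (a : ℤ) :
    (shiftPerm hσ ^ a) z ∈ cylinder X w ↔ OccursAt w z a := by
  simp [cylinder, OccursAt, add_comm]

lemma isClopen_cylinder [TopologicalSpace A] [DiscreteTopology A] (w : Fin n → A) :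
    IsClopen (cylinder X w) := by
  have : cylinder X w = ⋂ t : Fin n, (fun z : X => (z : ℤ → A) t) ⁻¹' {w t} := by
    ext
    simp [cylinder]
  rw [this]
  exact isClopen_iInter_of_finite fun t =>
    (isClopen_discrete _).preimage ((continuous_apply _).comp continuous_subtype_val)

lemma IsMinimalSubshift.exists_occursAt_mem_Icc [TopologicalSpace A] [DiscreteTopology A]
    [Finite A] (hX : IsMinimalSubshift X) (hw : w ∈ Lang X n) :
    ∃ K : ℕ, ∀ (z : X) (j : ℤ), ∃ a ∈ Icc j (j + K), OccursAt w z a := by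
  obtain ⟨x, hx, hxw⟩ := hw
  obtain ⟨K, hK⟩ := hX.exists_uniform_return (isClopen_cylinder w).isOpen ⟨⟨x, hx⟩, hxw⟩
  exact ⟨K, fun z j => (hK z j).imp fun a ⟨ha, haw⟩ =>
    ⟨ha, (shiftPerm_zpow_mem_cylinder_iff _ z a).1 haw⟩⟩

def occurrenceStabilizer (w : Fin n → A) : Subgroup (Equiv.Perm X) where
  carrier := {g | ∀ z a, OccursAt w (g z : ℤ → A) a ↔ OccursAt w z a}
  one_mem' _ _ := Iff.rfl
  mul_mem' {g h} hg hh z a := (hg (h z) a).trans (hh z a)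
  inv_mem' {g} hg z a := by simpa using (hg (g⁻¹ z) a).symm

lemma mapsTo_cylinder_of_mem_occurrenceStabilizer {g : Equiv.Perm X}
    (hg : g ∈ occurrenceStabilizer w) : MapsTo g (cylinder X w) (cylinder X w) := fun z hz =>
  mem_cylinder_iff.2 ((hg z 0).2 (mem_cylinder_iff.1 hz))

lemma IsMinimalSubshift.mem_occurrenceStabilizer [TopologicalSpace A] [DiscreteTopology A]
    [Finite A] (hX : IsMinimalSubshift X) {φ : Equiv.Perm X} (hφ : φ ∈ Aut X)
    (hmaps : MapsTo φ (cylinder X w) (cylinder X w)) : φ ∈ occurrenceStabilizer w := by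
  obtain ⟨hc, -, hcomm, -⟩ := hφ
  intro z a
  rw [← shiftPerm_zpow_mem_cylinder_iff hX.image_shiftMap_eq,
    ← shiftPerm_zpow_mem_cylinder_iff hX.image_shiftMap_eq, ← hcomm.apply_zpow]
  exact hX.apply_mem_iff_of_mapsTo (isClopen_cylinder w) hc hcomm hmaps _

def RespectsGaps (w : Fin n → A) (g : Equiv.Perm X) : Prop :=
  ∀ (x y : X) (a b : ℤ), OccursAt w x a → OccursAt w x b →
    EqOn (x : ℤ → A) y (Ico a (b + n)) → EqOn (g x : ℤ → A) (g y) (Ico a b)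

lemma respectsGaps_one : RespectsGaps w (1 : Equiv.Perm X) :=
  fun _ _ _ _ _ _ hxy _ ⟨h₁, h₂⟩ => hxy ⟨h₁, by omega⟩

lemma RespectsGaps.mul {g h : Equiv.Perm X} (hg : RespectsGaps w g) (hh : RespectsGaps w h)
    (hh' : h ∈ occurrenceStabilizer w) : RespectsGaps w (g * h) := by
  intro x y a b ha hb hxy i hi
  have hab : a ≤ b := hi.1.trans hi.2.le
  have hyb : OccursAt w y b := hb.of_eqOn (hxy.mono (Ico_subset_Ico hab le_rfl))
  refine hg (h x) (h y) a b ((hh' x a).2 ha) ((hh' x b).2 hb) ?_ hi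
  rw [← Ico_union_Ico_eq_Ico hab (by omega)]
  exact (hh x y a b ha hb hxy).union (((hh' x b).2 hb).eqOn ((hh' y b).2 hyb))

/-- Inside `[a, a + n)` both images carry `w`; beyond it the window of radius `R ≤ n` stays
inside `[a, b + n)`. -/
lemma respectsGaps_of_isBlockCode (hσ : shiftMap A '' X = X) {φ : Equiv.Perm X} {R : ℕ}
    (hφ : CommutesWithShift X φ) (hR : IsBlockCode X φ R) (hRn : R ≤ n)
    (hocc : φ ∈ occurrenceStabilizer w) : RespectsGaps w φ := by
  intro x y a b ha hb hxy i ⟨hai, hib⟩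
  by_cases hin : i < a + n
  · have hya : OccursAt w y a := ha.of_eqOn (hxy.mono (Ico_subset_Ico le_rfl (by omega)))
    exact ((hocc x a).2 ha).eqOn ((hocc y a).2 hya) ⟨hai, hin⟩
  · refine hR.apply_eq_of_eqOn hσ hφ (hxy.mono fun m hm => ?_)
    obtain ⟨h₁, h₂⟩ := hm
    exact ⟨by omega, by omega⟩

lemma RespectsGaps.isBlockCode {g : Equiv.Perm X} (hg : RespectsGaps w g) {K : ℕ}
    (hK : ∀ (z : X) (j : ℤ), ∃ a ∈ Icc j (j + K), OccursAt w z a) :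
    IsBlockCode X g (K + n + 1) := by
  intro x y hxy
  obtain ⟨a, ⟨ha₁, ha₂⟩, ha⟩ := hK x (-K)
  obtain ⟨b, ⟨hb₁, hb₂⟩, hb⟩ := hK x 1
  exact hg x y a b ha hb (fun m ⟨h₁, h₂⟩ => hxy m (by omega) (by omega))
    ⟨by omega, by omega⟩

lemma inv_mem_autR [TopologicalSpace A] {R : ℕ} {φ : Equiv.Perm X} (hφ : φ ∈ AutR X R) :
    φ⁻¹ ∈ AutR X R :=
  ⟨inv_mem hφ.1, hφ.2.2, hφ.2.1⟩

end Subshift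

/-- For a minimal subshift and a word `w` in its language, the subgroup
of `Aut(X)` generated by `S_w = {φ ∈ Aut_{⌊|w|/2⌋}(X) : φ([w]₀⁺) ⊆ [w]₀⁺}` is finite. -/
theorem stmt13 {A : Type*} [Fintype A] [TopologicalSpace A] [DiscreteTopology A]
    (X : Set (ℤ → A)) (hX : IsMinimalSubshift X) (n : ℕ) (w : Fin n → A)
    (hw : w ∈ Lang X n) :
    ((Subgroup.closure {φ : Equiv.Perm ↥X | φ ∈ AutR X (n / 2) ∧
        Set.MapsTo ⇑φ (cylinder X w) (cylinder X w)} : Subgroup (Equiv.Perm ↥X)) :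
      Set (Equiv.Perm ↥X)).Finite := by
  set S := {φ : Equiv.Perm X | φ ∈ AutR X (n / 2) ∧ MapsTo φ (cylinder X w) (cylinder X w)}
  have hσ := hX.image_shiftMap_eq
  have hgen : ∀ φ ∈ S, φ ∈ occurrenceStabilizer w ∧ RespectsGaps w φ := by
    rintro φ ⟨hφR, hmaps⟩
    have hocc := hX.mem_occurrenceStabilizer hφR.1 hmaps
    exact ⟨hocc,
      respectsGaps_of_isBlockCode hσ hφR.1.2.2.1 hφR.2.1 (Nat.div_le_self n 2) hocc⟩
  have hinv : ∀ φ ∈ S, φ⁻¹ ∈ S := fun φ hφ =>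
    ⟨inv_mem_autR hφ.1, mapsTo_cylinder_of_mem_occurrenceStabilizer (inv_mem (hgen φ hφ).1)⟩
  have hG : ∀ g ∈ Subgroup.closure S, g ∈ occurrenceStabilizer w ∧ RespectsGaps w g := by
    intro g hg
    induction hg using Subgroup.closure_induction'' with
    | mem φ hφ => exact hgen φ hφ
    | inv_mem φ hφ => exact hgen _ (hinv φ hφ)
    | one => exact ⟨one_mem _, respectsGaps_one⟩
    | mul g h _ _ hg hh => exact ⟨mul_mem hg.1 hh.1, hg.2.mul hh.2 hh.1⟩
  obtain ⟨K, hK⟩ := hX.exists_occursAt_mem_Icc hw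
  refine (finite_setOf_commutesWithShift_isBlockCode hσ (K + n + 1)).subset fun g hg =>
    ⟨?_, (hG g hg).2.isBlockCode hK⟩
  exact ((Subgroup.closure_le (Aut X)).2 (fun φ hφ => hφ.1.1) hg).2.2.1
end

section
/- Suppose (X,σ) is a minimal subshift over a finite alphabet, w ∈ L(X), and φ ∈ Aut_{⌊|w|/2⌋}(X) satisfies φ([w]_0^+) ⊆ [w]_0^+. Then φ has finite order; more precisely, if K_w denotes the maximal gap between consecutive occurrences of w in points of X (finite by minimality), then φ^{P_X(K_w)!} is the identity map on X. -/
open Filter Topology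

namespace S15

variable {A : Type*}

/-- Translation by `a`. -/
def tr (a : ℤ) (x : ℤ → A) : ℤ → A := fun i => x (i + a)

/-- `w` occurs in `x` at position `a`. -/
def Occ {n : ℕ} (w : Fin n → A) (x : ℤ → A) (a : ℤ) : Prop :=
  ∀ i : Fin n, x (a + (i.val : ℤ)) = w i

lemma occ_tr {n : ℕ} (w : Fin n → A) (x : ℤ → A) (d a : ℤ) :
    Occ w (tr d x) a ↔ Occ w x (a + d) := by
  unfold Occ tr
  constructor <;> intro h i <;> have := h i <;>
    · rw [show a + d + (i.val : ℤ) = a + (i.val : ℤ) + d by ring] at *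
      exact this

section Shift
variable [TopologicalSpace A] {X : Set (ℤ → A)}

lemma tr_mem (hX : IsSubshift X) (a : ℤ) {x : ℤ → A} (hx : x ∈ X) : tr a x ∈ X := by
  induction a using Int.induction_on with
  | zero =>
      have : tr 0 x = x := by funext i; simp [tr]
      rwa [this]
  | succ k ih =>
      have : tr ((k : ℤ) + 1) x = shiftMap A (tr k x) := by
        funext i; simp [tr, shiftMap]; ring_nf
      rw [this, ← hX.2.2]
      exact Set.mem_image_of_mem _ ih
  | pred k ih =>
      have h2 : tr (-(k : ℤ)) x ∈ shiftMap A '' X := by rw [hX.2.2]; exact ih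
      obtain ⟨z, hz, hzs⟩ := h2
      have : z = tr (-(k : ℤ) - 1) x := by
        funext j
        have := congrFun hzs (j - 1)
        simp only [shiftMap, tr] at this ⊢
        rw [show j - 1 + 1 = j by ring] at this
        rw [this]; congr 1; ring
      rwa [← this]

/-- Translation as a map on the subtype. -/
def trS (hX : IsSubshift X) (a : ℤ) (x : ↥X) : ↥X := ⟨tr a ↑x, tr_mem hX a x.2⟩

lemma equivar (hX : IsSubshift X) (f : ↥X → ↥X) (hf : CommutesWithShift X f)
    (a : ℤ) (x : ↥X) : (↑(f (trS hX a x)) : ℤ → A) = tr a ↑(f x) := by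
  induction a using Int.induction_on with
  | zero =>
      have : trS hX 0 x = x := by
        apply Subtype.ext; funext i; simp [trS, tr]
      rw [this]; funext i; simp [tr]
  | succ k ih =>
      have hs : shiftMap A (↑(trS hX k x) : ℤ → A) = (↑(trS hX ((k:ℤ)+1) x) : ℤ → A) := by
        funext i; simp only [shiftMap, trS, tr]; congr 1; ring
      have := hf _ _ hs
      rw [← this, ih]
      funext i; simp only [shiftMap, tr]; congr 1; ring
  | pred k ih =>
      have hs : shiftMap A (↑(trS hX (-(k:ℤ)-1) x) : ℤ → A) = (↑(trS hX (-(k:ℤ)) x) : ℤ → A) := by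
        funext i; simp only [shiftMap, trS, tr]; congr 1; ring
      have h1 := hf _ _ hs
      rw [ih] at h1
      funext j
      have := congrFun h1 (j - 1)
      simp only [shiftMap, tr] at this ⊢
      rw [show j - 1 + 1 = j by ring] at this
      rw [this]; congr 1; ring

end Shift

end S15

namespace S15
variable {A : Type*} [TopologicalSpace A] {X : Set (ℤ → A)}

lemma blockAt (hX : IsSubshift X) {R : ℕ} (f : ↥X → ↥X)
    (hf : IsBlockCode X f R) (hfc : CommutesWithShift X f) (x y : ↥X) (j : ℤ)
    (h : ∀ i : ℤ, j - R ≤ i → i ≤ j + R → (↑x : ℤ → A) i = (↑y : ℤ → A) i) :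
    (↑(f x) : ℤ → A) j = (↑(f y) : ℤ → A) j := by
  have key := hf (trS hX j x) (trS hX j y) (by
    intro i h1 h2
    simp only [trS, tr]
    exact h (i + j) (by omega) (by omega))
  rw [equivar hX f hfc, equivar hX f hfc] at key
  simpa [tr] using key

variable {n : ℕ} {w : Fin n → A}

lemma occ_cyl (hX : IsSubshift X) {x : ↥X} {a : ℤ} (h : Occ w (↑x) a) :
    trS hX a x ∈ cylinder X w := by
  intro i
  simp only [trS, tr]
  rw [show (i.val : ℤ) + a = a + i.val by ring]
  exact h i

lemma persist (hX : IsSubshift X) (φ : Equiv.Perm ↥X) (hC : CommutesWithShift X ⇑φ)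
    (hmaps : Set.MapsTo ⇑φ (cylinder X w) (cylinder X w)) (x : ↥X) (a : ℤ)
    (h : Occ w (↑x) a) : Occ w (↑(φ x)) a := by
  have h1 := hmaps (occ_cyl hX h)
  intro i
  have h2 := h1 i
  rw [equivar hX ⇑φ hC] at h2
  simp only [tr] at h2
  rw [show a + (i.val : ℤ) = (i.val : ℤ) + a by ring]
  exact h2

lemma agree (hX : IsSubshift X) {R : ℕ} (hRn : R ≤ n) (φ : Equiv.Perm ↥X)
    (hC : CommutesWithShift X ⇑φ) (hB : IsBlockCode X ⇑φ R)
    (hmaps : Set.MapsTo ⇑φ (cylinder X w) (cylinder X w))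
    (x y : ↥X) (g : ℕ)
    (hx0 : Occ w (↑x) 0) (hxg : Occ w (↑x) g)
    (hy0 : Occ w (↑y) 0) (hyg : Occ w (↑y) g)
    (hxy : ∀ i : ℤ, 0 ≤ i → i < g + n → (↑x : ℤ → A) i = (↑y : ℤ → A) i) :
    ∀ j : ℤ, 0 ≤ j → j < g + n → (↑(φ x) : ℤ → A) j = (↑(φ y) : ℤ → A) j := by
  intro j hj0 hj1
  rcases lt_or_ge j n with hn1 | hn1
  · have hfx := persist hX φ hC hmaps x 0 hx0 ⟨j.toNat, by omega⟩
    have hfy := persist hX φ hC hmaps y 0 hy0 ⟨j.toNat, by omega⟩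
    rw [show (0 : ℤ) + ((⟨j.toNat, by omega⟩ : Fin n).val : ℤ) = j by simp; omega] at hfx hfy
    rw [hfx, hfy]
  · rcases le_or_gt (g : ℤ) j with hg1 | hg1
    · have hfx := persist hX φ hC hmaps x g hxg ⟨(j - g).toNat, by omega⟩
      have hfy := persist hX φ hC hmaps y g hyg ⟨(j - g).toNat, by omega⟩
      rw [show (g : ℤ) + (((⟨(j - g).toNat, by omega⟩ : Fin n)).val : ℤ) = j by simp; omega]
        at hfx hfy
      rw [hfx, hfy]
    · exact blockAt hX ⇑φ hB hC x y j (fun i h1 h2 => hxy i (by omega) (by omega))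

lemma inj_core (hX : IsSubshift X) {R : ℕ} (hRn : R ≤ n) (φ : Equiv.Perm ↥X)
    (hC' : CommutesWithShift X ⇑φ.symm) (hB' : IsBlockCode X ⇑φ.symm R)
    (x y : ↥X) (g : ℕ)
    (hx0 : Occ w (↑x) 0) (hxg : Occ w (↑x) g)
    (hy0 : Occ w (↑y) 0) (hyg : Occ w (↑y) g)
    (hxy : ∀ i : ℤ, 0 ≤ i → i < g + n → (↑(φ x) : ℤ → A) i = (↑(φ y) : ℤ → A) i) :
    ∀ j : ℤ, 0 ≤ j → j < g + n → (↑x : ℤ → A) j = (↑y : ℤ → A) j := by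
  intro j hj0 hj1
  rcases lt_or_ge j n with hn1 | hn1
  · have h1 := hx0 ⟨j.toNat, by omega⟩
    have h2 := hy0 ⟨j.toNat, by omega⟩
    rw [show (0 : ℤ) + ((⟨j.toNat, by omega⟩ : Fin n).val : ℤ) = j by simp; omega] at h1 h2
    rw [h1, h2]
  · rcases le_or_gt (g : ℤ) j with hg1 | hg1
    · have h1 := hxg ⟨(j - g).toNat, by omega⟩
      have h2 := hyg ⟨(j - g).toNat, by omega⟩
      rw [show (g : ℤ) + ((⟨(j - g).toNat, by omega⟩ : Fin n).val : ℤ) = j by simp; omega]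
        at h1 h2
      rw [h1, h2]
    · have key := blockAt hX ⇑φ.symm hB' hC' (φ x) (φ y) j
        (fun i h1 h2 => hxy i (by omega) (by omega))
      simpa using key

end S15

namespace S15
variable {A : Type*} [Fintype A] [TopologicalSpace A] [DiscreteTopology A]
  {X : Set (ℤ → A)} {n : ℕ} {w : Fin n → A}

lemma isOpen_occ (w : Fin n → A) (a : ℤ) : IsOpen {x : ℤ → A | Occ w x a} := by
  have : {x : ℤ → A | Occ w x a} = ⋂ i : Fin n, (fun x : ℤ → A => x (a + i.val)) ⁻¹' {w i} := by
    ext x; simp [Occ, Set.mem_iInter]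
  rw [this]
  exact isOpen_iInter_of_finite fun i =>
    (continuous_apply _).isOpen_preimage _ (isOpen_discrete _)

lemma exists_occ (hX : IsMinimalSubshift X) (hw : w ∈ Lang X n) :
    ∀ x ∈ X, ∃ a : ℤ, Occ w x a := by
  by_contra hcon
  push_neg at hcon
  obtain ⟨x₀, hx₀, hx₀n⟩ := hcon
  set Y : Set (ℤ → A) := {x ∈ X | ∀ a : ℤ, ¬ Occ w x a} with hY
  have hYX : Y ⊆ X := fun x hx => hx.1
  have hYne : Y.Nonempty := ⟨x₀, hx₀, hx₀n⟩
  have hYc : IsClosed Y := by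
    have : Y = X ∩ ⋂ a : ℤ, {x : ℤ → A | Occ w x a}ᶜ := by
      ext x; simp [hY, Set.mem_iInter]
    rw [this]
    exact hX.1.2.1.inter (isClosed_iInter fun a => (isOpen_occ w a).isClosed_compl)
  have hocc_shift : ∀ (x : ℤ → A) (a : ℤ), Occ w (shiftMap A x) a ↔ Occ w x (a + 1) := by
    intro x a
    have : shiftMap A x = tr 1 x := rfl
    rw [this, occ_tr]
  have hYi : shiftMap A '' Y = Y := by
    apply Set.Subset.antisymm
    · rintro y ⟨x, ⟨hxX, hxn⟩, rfl⟩
      refine ⟨?_, ?_⟩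
      · rw [← hX.1.2.2]; exact Set.mem_image_of_mem _ hxX
      · intro a hya
        exact hxn (a + 1) ((hocc_shift x a).mp hya)
    · intro x hx
      have hxX : x ∈ X := hx.1
      rw [← hX.1.2.2] at hxX
      obtain ⟨z, hz, rfl⟩ := hxX
      refine ⟨z, ⟨hz, ?_⟩, rfl⟩
      intro a ha
      exact hx.2 (a - 1) (by rw [hocc_shift z (a - 1), show a - 1 + 1 = a by ring] at *; exact ha)
  have := hX.2 Y hYX hYne hYc hYi
  obtain ⟨xw, hxwX, hxw⟩ := hw
  have hxwY : xw ∈ Y := this ▸ hxwX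
  exact hxwY.2 0 (fun i => by rw [zero_add]; exact hxw i)

lemma syndetic (hX : IsMinimalSubshift X) (hw : w ∈ Lang X n) :
    ∃ Nb : ℕ, ∀ x ∈ X, ∀ c : ℤ, ∃ a : ℤ, c ≤ a ∧ a ≤ c + Nb ∧ Occ w x a := by
  have hcomp : IsCompact X := hX.1.2.1.isCompact
  have hcover : X ⊆ ⋃ a : ℤ, {x : ℤ → A | Occ w x a} := by
    intro x hx
    obtain ⟨a, ha⟩ := exists_occ hX hw x hx
    exact Set.mem_iUnion.mpr ⟨a, ha⟩
  obtain ⟨t, ht⟩ := hcomp.elim_finite_subcover _ (fun a => isOpen_occ w a) hcover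
  set Nb : ℕ := t.sup fun a => a.natAbs with hNb
  refine ⟨2 * Nb, fun x hx c => ?_⟩
  have hx' : tr (c + Nb) x ∈ X := tr_mem hX.1 _ hx
  obtain ⟨a₀, ha₀⟩ := Set.mem_iUnion₂.mp (ht hx')
  obtain ⟨ha₀t, ha₀occ2⟩ := ha₀
  have habs : a₀.natAbs ≤ Nb := Finset.le_sup (f := fun a : ℤ => a.natAbs) ha₀t
  have ha₀occ' : Occ w x (a₀ + (c + Nb)) := (occ_tr w x _ _).mp ha₀occ2
  exact ⟨a₀ + (c + Nb), by omega, by push_cast; omega, ha₀occ'⟩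

end S15

namespace S15
variable {A : Type*} [Fintype A] [TopologicalSpace A] [DiscreteTopology A]
  {X : Set (ℤ → A)} {n : ℕ} {w : Fin n → A}

lemma complexity_mono (X : Set (ℤ → A)) {g m : ℕ} (h : g ≤ m) :
    complexity X g ≤ complexity X m := by
  have hsub : Lang X g ⊆ (fun u : Fin m → A => u ∘ Fin.castLE h) '' Lang X m := by
    rintro u ⟨x, hx, hxu⟩
    refine ⟨fun i => x i.val, ⟨x, hx, fun i => rfl⟩, ?_⟩
    funext i
    exact hxu i
  calc complexity X g ≤ ((fun u : Fin m → A => u ∘ Fin.castLE h) '' Lang X m).ncard :=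
        Set.ncard_le_ncard hsub (Set.toFinite _)
    _ ≤ complexity X m := Set.ncard_image_le (Set.toFinite _)

lemma key (hX : IsSubshift X) {R : ℕ} (hRn : R ≤ n) (φ : Equiv.Perm ↥X)
    (hφA : φ ∈ Aut X) (hB : IsBlockCode X ⇑φ R) (hB' : IsBlockCode X ⇑φ.symm R)
    (hmaps : Set.MapsTo ⇑φ (cylinder X w) (cylinder X w))
    (g P : ℕ) (hgP : complexity X g ≤ P)
    (x : ↥X) (h0 : Occ w (↑x) 0) (hg : Occ w (↑x) (g : ℤ)) :
    ∀ j : ℤ, 0 ≤ j → j < g + n →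
      (↑((φ ^ P.factorial) x) : ℤ → A) j = (↑x : ℤ → A) j := by
  classical
  have hC : CommutesWithShift X ⇑φ := hφA.2.2.1
  have hC' : CommutesWithShift X ⇑φ.symm := hφA.2.2.2
  set res : ↥X → (Fin (g + n) → A) := fun z j => (↑z : ℤ → A) (j.val : ℤ) with hres
  set W : Set (Fin (g + n) → A) :=
    {u | ∃ z : ↥X, Occ w (↑z) 0 ∧ Occ w (↑z) (g : ℤ) ∧ res z = u} with hW
  have hresW : ∀ z : ↥X, Occ w (↑z) 0 → Occ w (↑z) (g : ℤ) → res z ∈ W :=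
    fun z h1 h2 => ⟨z, h1, h2, rfl⟩
  have hex : ∀ u : ↥W, ∃ z : ↥X, Occ w (↑z) 0 ∧ Occ w (↑z) (g : ℤ) ∧ res z = u.val :=
    fun u => u.2
  choose pick p1 p2 p3 using hex
  -- agreement on window from equality of restrictions
  have res_agree : ∀ (z z' : ↥X), res z = res z' →
      ∀ i : ℤ, 0 ≤ i → i < g + n → (↑z : ℤ → A) i = (↑z' : ℤ → A) i := by
    intro z z' hzz i hi0 hi1
    have := congrFun hzz ⟨i.toNat, by omega⟩
    simpa [hres, Int.toNat_of_nonneg hi0] using this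
  -- the induced map on W
  set Φ : ↥W → ↥W := fun u =>
    ⟨res (φ (pick u)), hresW _ (persist hX φ hC hmaps _ 0 (p1 u))
      (persist hX φ hC hmaps _ _ (p2 u))⟩ with hΦ
  have wd : ∀ (z : ↥X), Occ w (↑z) 0 → Occ w (↑z) (g : ℤ) → ∀ u : ↥W,
      res z = u.val → res (φ z) = (Φ u).val := by
    intro z h1 h2 u hu
    have hag := agree hX hRn φ hC hB hmaps z (pick u) g h1 h2 (p1 u) (p2 u)
      (res_agree z (pick u) (by rw [hu, p3 u]))
    funext j
    have hj := j.isLt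
    exact hag (j.val : ℤ) (by positivity) (by exact_mod_cast hj)
  have hinj : Function.Injective Φ := by
    intro u v huv
    have hval : res (φ (pick u)) = res (φ (pick v)) := congrArg Subtype.val huv
    have := inj_core hX hRn φ hC' hB' (pick u) (pick v) g (p1 u) (p2 u) (p1 v) (p2 v)
      (res_agree _ _ hval)
    apply Subtype.ext
    rw [← p3 u, ← p3 v]
    funext j
    have hj := j.isLt
    exact this (j.val : ℤ) (by positivity) (by exact_mod_cast hj)
  have hWfin : Finite ↥W := Subtype.finite
  haveI : Fintype ↥W := Fintype.ofFinite _
  set e : Equiv.Perm ↥W := Equiv.ofBijective Φ (Finite.injective_iff_bijective.mp hinj)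
    with he
  have heapp : ∀ u : ↥W, e u = Φ u := fun u => by rw [he]; rfl
  -- cardinality bound
  have hcard : Fintype.card ↥W ≤ P := by
    have h1 : Fintype.card ↥W = W.ncard := by
      rw [← Nat.card_coe_set_eq, Nat.card_eq_fintype_card]
    have h2 : W.ncard ≤ (Lang X g).ncard := by
      apply Set.ncard_le_ncard_of_injOn (fun u : Fin (g + n) → A => u ∘ Fin.castAdd n)
      · rintro u ⟨z, h1, h2, h3⟩
        refine ⟨↑z, z.2, fun i => ?_⟩
        have := congrFun h3 (Fin.castAdd n i)
        simpa [hres] using this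
      · rintro u hu v hv huv
        obtain ⟨zu, hu1, hu2, hu3⟩ := hu
        obtain ⟨zv, hv1, hv2, hv3⟩ := hv
        funext j
        rcases lt_or_ge j.val g with hjg | hjg
        · have := congrFun huv ⟨j.val, hjg⟩
          simpa [show Fin.castAdd n (⟨j.val, hjg⟩ : Fin g) = j from Fin.ext rfl] using this
        · have hju := hu2 ⟨j.val - g, by omega⟩
          have hjv := hv2 ⟨j.val - g, by omega⟩
          have hidx : (g : ℤ) + ((j.val - g : ℕ) : ℤ) = (j.val : ℤ) := by
            have := j.isLt; push_cast; omega
          rw [hidx] at hju hjv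
          have hju' := congrFun hu3 j
          have hjv' := congrFun hv3 j
          simp only [hres] at hju' hjv'
          rw [← hju', ← hjv', hju, hjv]
    exact le_trans (h1 ▸ h2) hgP
  -- the permutation has order dividing P!
  have horder : e ^ P.factorial = 1 := by
    apply orderOf_dvd_iff_pow_eq_one.mp
    calc orderOf e ∣ Fintype.card (Equiv.Perm ↥W) := orderOf_dvd_card
      _ = (Fintype.card ↥W).factorial := Fintype.card_perm
      _ ∣ P.factorial := Nat.factorial_dvd_factorial hcard
  -- iterate
  set u₀ : ↥W := ⟨res x, hresW x h0 hg⟩ with hu₀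
  have iter : ∀ k : ℕ, Occ w (↑((φ ^ k) x)) 0 ∧ Occ w (↑((φ ^ k) x)) (g : ℤ) ∧
      res ((φ ^ k) x) = ((e ^ k) u₀).val := by
    intro k
    induction k with
    | zero =>
        refine ⟨by simpa using h0, by simpa using hg, ?_⟩
        simp [hu₀]
    | succ k ih =>
        obtain ⟨hy0, hyg, hyres⟩ := ih
        have hstep : (φ ^ (k + 1)) x = φ ((φ ^ k) x) := by
          rw [pow_succ']; rfl
        have hestep : (e ^ (k + 1)) u₀ = e ((e ^ k) u₀) := by
          rw [pow_succ']; rfl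
        refine ⟨?_, ?_, ?_⟩
        · rw [hstep]; exact persist hX φ hC hmaps _ 0 hy0
        · rw [hstep]; exact persist hX φ hC hmaps _ _ hyg
        · rw [hstep, hestep, heapp]
          exact wd _ hy0 hyg _ hyres
  intro j hj0 hj1
  have hfin := (iter P.factorial).2.2
  rw [horder] at hfin
  simp only [Equiv.Perm.coe_one, id_eq] at hfin
  have := congrFun hfin ⟨j.toNat, by omega⟩
  simpa [hres, Int.toNat_of_nonneg hj0, hu₀] using this

end S15

/-- For a minimal subshift, a word `w` in its language, and
`φ ∈ Aut_{⌊|w|/2⌋}(X)` with `φ([w]₀⁺) ⊆ [w]₀⁺`, the automorphism `φ` has finite order;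
more precisely `φ^{P_X(K_w)!} = id`, where `K_w` is the maximal gap between consecutive
occurrences of `w` in points of `X`. -/
theorem stmt15 {A : Type*} [Fintype A] [TopologicalSpace A] [DiscreteTopology A]
    (X : Set (ℤ → A)) (hX : IsMinimalSubshift X) (n : ℕ) (w : Fin n → A)
    (hw : w ∈ Lang X n)
    (φ : Equiv.Perm ↥X) (hφR : φ ∈ AutR X (n / 2))
    (hφw : Set.MapsTo ⇑φ (cylinder X w) (cylinder X w))
    (Kw : ℕ)
    (hKw : Kw = sSup {K : ℕ | 1 ≤ K ∧ ∃ x ∈ cylinder X w,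
      ∀ m : ℕ, 0 < m → m < K →
        ¬ ∀ t : Fin n, (x : ℤ → A) ((m : ℤ) + (t.val : ℤ)) = w t}) :
    IsOfFinOrder φ ∧ φ ^ (Nat.factorial (complexity X Kw)) = 1 := by
  classical
  obtain ⟨hφA, hB, hB'⟩ := hφR
  have hXs : IsSubshift X := hX.1
  have hRn : n / 2 ≤ n := Nat.div_le_self n 2
  obtain ⟨Nb, hNb⟩ := S15.syndetic hX hw
  set S : Set ℕ := {K : ℕ | 1 ≤ K ∧ ∃ x ∈ cylinder X w,
      ∀ m : ℕ, 0 < m → m < K →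
        ¬ ∀ t : Fin n, (x : ℤ → A) ((m : ℤ) + (t.val : ℤ)) = w t} with hSdef
  -- translate the inner condition to `Occ`
  have hScond : ∀ (x : ↥X) (m : ℕ),
      (∀ t : Fin n, (x : ℤ → A) ((m : ℤ) + (t.val : ℤ)) = w t) ↔ S15.Occ w (↑x) (m : ℤ) :=
    fun x m => Iff.rfl
  have hbdd : BddAbove S := by
    refine ⟨Nb + 1, fun K hK => ?_⟩
    obtain ⟨hK1, x, hxc, hxgap⟩ := hK
    obtain ⟨a, ha1, ha2, haocc⟩ := hNb (↑x) x.2 1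
    by_contra hcon
    push_neg at hcon
    have hm : (0 : ℕ) < a.toNat ∧ a.toNat < K := by omega
    refine hxgap a.toNat hm.1 hm.2 ?_
    have : ((a.toNat : ℤ)) = a := by omega
    rw [hScond, this]
    exact haocc
  have h1S : 1 ∈ S := by
    obtain ⟨x₀, hx₀X, hx₀⟩ := hw
    exact ⟨le_refl 1, ⟨x₀, hx₀X⟩, fun i => hx₀ i, fun m hm1 hm2 => by omega⟩
  have hgap : ∀ (x : ↥X) (a b : ℤ), a < b → S15.Occ w (↑x) a → S15.Occ w (↑x) b →
      (∀ c : ℤ, a < c → c < b → ¬ S15.Occ w (↑x) c) → (b - a).toNat ≤ Kw := by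
    intro x a b hab hoa hob hcons
    rw [hKw]
    apply le_csSup hbdd
    refine ⟨by omega, S15.trS hXs a x, S15.occ_cyl hXs hoa, fun m hm1 hm2 hocc => ?_⟩
    rw [hScond] at hocc
    have : S15.Occ w (↑x) ((m : ℤ) + a) := (S15.occ_tr w (↑x) a (m : ℤ)).mp hocc
    exact hcons ((m : ℤ) + a) (by omega) (by omega) this
  -- main identity
  have hMeq : φ ^ (Nat.factorial (complexity X Kw)) = 1 := by
    apply Equiv.ext
    intro x
    apply Subtype.ext
    funext j
    -- find consecutive occurrences around j
    haveI : DecidablePred fun c : ℤ => S15.Occ w (↑x) c := Classical.decPred _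
    set F₁ : Finset ℤ := (Finset.Icc (j - Nb) j).filter (fun c => S15.Occ w (↑x) c) with hF₁
    set F₂ : Finset ℤ := (Finset.Icc (j + 1) (j + 1 + Nb)).filter
      (fun c => S15.Occ w (↑x) c) with hF₂
    have hF₁ne : F₁.Nonempty := by
      obtain ⟨a, h1, h2, h3⟩ := hNb (↑x) x.2 (j - Nb)
      exact ⟨a, Finset.mem_filter.mpr ⟨Finset.mem_Icc.mpr ⟨h1, by omega⟩, h3⟩⟩
    have hF₂ne : F₂.Nonempty := by
      obtain ⟨a, h1, h2, h3⟩ := hNb (↑x) x.2 (j + 1)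
      exact ⟨a, Finset.mem_filter.mpr ⟨Finset.mem_Icc.mpr ⟨h1, by omega⟩, h3⟩⟩
    set a := F₁.max' hF₁ne with ha
    set b := F₂.min' hF₂ne with hb
    have haF : a ∈ F₁ := F₁.max'_mem hF₁ne
    have hbF : b ∈ F₂ := F₂.min'_mem hF₂ne
    obtain ⟨haI, haocc⟩ := Finset.mem_filter.mp haF
    obtain ⟨hbI, hbocc⟩ := Finset.mem_filter.mp hbF
    rw [Finset.mem_Icc] at haI hbI
    have haj : a ≤ j := haI.2
    have hjb : j < b := by omega
    have hcons : ∀ c : ℤ, a < c → c < b → ¬ S15.Occ w (↑x) c := by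
      intro c hc1 hc2 hocc
      rcases le_or_gt c j with hcj | hcj
      · have hcF : c ∈ F₁ := Finset.mem_filter.mpr ⟨Finset.mem_Icc.mpr ⟨by omega, hcj⟩, hocc⟩
        have := F₁.le_max' c hcF
        omega
      · have hcF : c ∈ F₂ := Finset.mem_filter.mpr ⟨Finset.mem_Icc.mpr ⟨by omega, by omega⟩, hocc⟩
        have := F₂.min'_le c hcF
        omega
    set g : ℕ := (b - a).toNat with hg
    have hgz : (g : ℤ) = b - a := by omega
    have hgK : g ≤ Kw := hgap x a b (by omega) haocc hbocc hcons
    have hcmp : complexity X g ≤ complexity X Kw := S15.complexity_mono X hgK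
    -- apply the key lemma to the translate
    have ho0 : S15.Occ w (↑(S15.trS hXs a x)) 0 := by
      have := (S15.occ_tr w (↑x) a 0).mpr (by rwa [zero_add])
      exact this
    have hog : S15.Occ w (↑(S15.trS hXs a x)) (g : ℤ) := by
      refine (S15.occ_tr w (↑x) a (g : ℤ)).mpr ?_
      rw [show (g : ℤ) + a = b by omega]
      exact hbocc
    have hkey := S15.key hXs hRn φ hφA hB hB' hφw g (complexity X Kw) hcmp
      (S15.trS hXs a x) ho0 hog (j - a) (by omega) (by omega)
    -- rewrite via equivariance of φ^M
    have hφM : φ ^ (Nat.factorial (complexity X Kw)) ∈ Aut X := pow_mem hφA _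
    have hCM : CommutesWithShift X ⇑(φ ^ (Nat.factorial (complexity X Kw))) := hφM.2.2.1
    rw [S15.equivar hXs _ hCM a x] at hkey
    simp only [S15.trS, S15.tr] at hkey
    rw [show j - a + a = j by ring] at hkey
    simpa using hkey
  exact ⟨isOfFinOrder_iff_pow_eq_one.mpr
    ⟨Nat.factorial (complexity X Kw), Nat.factorial_pos _, hMeq⟩, hMeq⟩
end
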